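/- Let W be a square-free word of length n over a finite alphabet Σ. Then the number of pairs (b, c), where b is a gap of W (0 ≤ b ≤ n) and c ∈ Σ is a letter, such that the word W +_b c obtained by inserting c at gap b contains a square, is less than 16.7(n + 1). -/

import Mathlib

/-!
If inserting `c` at gap `b` creates a square `XX`, the square must contain the inserted letter;
reversing the word if necessary, it lies in the first copy of `X`. With `k = |X| - 1`, the square
shows up in `W` as a configuration of level `k` at `b`: a run of length `k` around the gap on which
`W` repeats with shift `k` left of the gap and with shift `k + 1` right of it, and `c` is the letter
at distance `k` after the gap. So the bad pairs number at most the pairs (level, gap carrying a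
configuration of that level) of `W` plus those of its reversal.

Square-freeness forbids two shifts `m < m'` to agree on `m' - m` consecutive positions. Hence the
configurations of one level occupy disjoint intervals, so level `k` has at most `n / k` of them, and
configurations of levels `k + 2 ≤ k'` overlap in fewer than `4 (k' - k)` positions. Within the
levels `[8m, 16m)` this leaves at most `32` configurations covering any position (two parities,
two halves, eight level buckets of width `m + 2`), hence at most `4n / m` configurations. Summing
`n + 1` for level `0`, `n` for each dyadic class below `32` and a geometric series above gives at
most `8n + 1` configurations, hence at most `16n + 2` bad pairs.
-/

/-- A word is square-free if it contains no factor of the form `X ++ X` with `X` nonempty. -/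
def SquareFree {α : Type*} (W : List α) : Prop :=
  ∀ X : List α, X ≠ [] → ¬ (X ++ X) <:+: W

/-- `W'` is an extension of `W` if it is obtained by inserting a single letter into `W`. -/
def IsExtension {α : Type*} (W W' : List α) : Prop :=
  ∃ (W₁ W₂ : List α) (x : α), W = W₁ ++ W₂ ∧ W' = W₁ ++ [x] ++ W₂

/-- A square-free word is extremal square-free if none of its extensions is square-free. -/
def ExtremalSquareFree {α : Type*} (W : List α) : Prop :=
  SquareFree W ∧ ∀ W', IsExtension W W' → ¬ SquareFree W'

section

open Finset

variable {α : Type*}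

def RepeatsAt (w : List α) (m i : ℕ) : Prop :=
  i + m < w.length ∧ w[i]? = w[i + m]?

theorem RepeatsAt.sub {w : List α} {m m' i : ℕ} (h : RepeatsAt w m i) (h' : RepeatsAt w m' i)
    (hm : m ≤ m') : RepeatsAt w (m' - m) (i + m) :=
  ⟨by have := h'.1; omega, by rw [show i + m + (m' - m) = i + m' by omega, ← h.2, h'.2]⟩

theorem not_squareFree_iff_exists_repeatsAt {w : List α} :
    ¬ SquareFree w ↔ ∃ s p, 0 < p ∧ ∀ i ∈ Ico s (s + p), RepeatsAt w p i := by
  simp only [SquareFree, not_forall, not_not, exists_prop, List.infix_iff_getElem?]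
  constructor
  · rintro ⟨X, hX, s, hlen, hget⟩
    refine ⟨s, X.length, List.length_pos_iff.mpr hX, fun i hi => ?_⟩
    rw [mem_Ico] at hi
    simp only [List.length_append] at hlen hget
    have h₁ := hget (i - s) (by omega)
    have h₂ := hget (i - s + X.length) (by omega)
    rw [List.getElem_append_left (by omega)] at h₁
    rw [List.getElem_append_right (by omega)] at h₂
    refine ⟨by omega, ?_⟩
    rw [show i = i - s + s by omega, h₁, show i - s + s + X.length = i - s + X.length + s by omega,
      h₂]
    simp
  · rintro ⟨s, p, hp, hrep⟩
    have hlen : s + p + p ≤ w.length := by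
      have := (hrep (s + p - 1) (by simp; omega)).1
      omega
    have hX : ((w.drop s).take p).length = p := by simp; omega
    refine ⟨(w.drop s).take p, by simp; omega, s, by simp; omega, fun i hi => ?_⟩
    simp only [List.length_append, hX] at hi
    rw [← List.getElem?_eq_getElem, List.getElem?_append, hX]
    split_ifs with hip
    · rw [List.getElem?_take_of_lt hip, List.getElem?_drop, add_comm]
    · rw [List.getElem?_take_of_lt (by omega), List.getElem?_drop,
        (hrep (s + (i - p)) (by simp; omega)).2]
      congr 1
      omega

namespace SquareFree

variable {w : List α}

theorem reverse (hw : SquareFree w) : SquareFree w.reverse := fun X hX hXX =>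
  hw X.reverse (by simpa using hX) (by simpa using List.reverse_infix.mpr hXX)

theorem not_forall_repeatsAt (hw : SquareFree w) {p : ℕ} (hp : 0 < p) (s : ℕ) :
    ¬ ∀ i ∈ Ico s (s + p), RepeatsAt w p i :=
  fun h => not_squareFree_iff_exists_repeatsAt.mpr ⟨s, p, hp, h⟩ hw

/-- On a longer run, `w` would have period `m' - m` on a block of length `2 (m' - m)`. -/
theorem sub_lt_of_repeatsAt (hw : SquareFree w) {m m' x y : ℕ} (hm : m < m')
    (h : ∀ i ∈ Ico x y, RepeatsAt w m i ∧ RepeatsAt w m' i) : y - x < m' - m := by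
  by_contra! hlong
  refine hw.not_forall_repeatsAt (Nat.sub_pos_of_lt hm) (x + m) fun j hj => ?_
  rw [mem_Ico] at hj
  obtain ⟨h₁, h₂⟩ := h (j - m) (mem_Ico.mpr ⟨by omega, by omega⟩)
  simpa [show j - m + m = j by omega] using h₁.sub h₂ hm.le

theorem not_repeatsAt_succ (hw : SquareFree w) {m i : ℕ} (h : RepeatsAt w m i) :
    ¬ RepeatsAt w (m + 1) i := fun h' => by
  have := hw.sub_lt_of_repeatsAt (x := i) (y := i + 1) (Nat.lt_succ_self m) fun j hj => by
    obtain rfl : j = i := by simp at hj; omega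
    exact ⟨h, h'⟩
  omega

end SquareFree

/-- The trace in `w` of a square `XX` with `|X| = k + 1` that starts at `s` in the word obtained by
inserting a letter at gap `b` of `w`, the inserted letter lying in the first `X`: to the left of
the gap, `w` repeats with shift `k`, to the right of it with shift `k + 1`. -/
structure IsConfig (w : List α) (k s b : ℕ) : Prop where
  le : s ≤ b
  le_add : b ≤ s + k
  left : ∀ i ∈ Ico s b, RepeatsAt w k i
  right : ∀ i ∈ Ico b (s + k), RepeatsAt w (k + 1) i

namespace IsConfig

variable {w : List α} {k k' s s' b b' : ℕ}

theorem lt_add (hw : SquareFree w) (hk : 0 < k) (h : IsConfig w k s b) : b < s + k := by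
  by_contra! hb
  exact hw.not_forall_repeatsAt hk s fun i hi => h.left i (by simp at hi ⊢; omega)

theorem Ico_subset_range (h : IsConfig w k s b) : Ico s (s + k) ⊆ range w.length := by
  intro i hi
  rw [mem_range]
  rw [mem_Ico] at hi
  by_cases hib : i < b
  · have := (h.left i (mem_Ico.mpr ⟨hi.1, hib⟩)).1; omega
  · have := (h.right i (mem_Ico.mpr ⟨by omega, hi.2⟩)).1; omega

theorem add_le_of_lt (hw : SquareFree w) (hk : 0 < k) (h : IsConfig w k s b)
    (h' : IsConfig w k s' b') (hbb : b < b') : s + k ≤ s' := by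
  by_contra! hs'
  have hb := h.lt_add hw hk
  rcases lt_or_ge (max s' b) b' with hlt | hge
  · exact hw.not_repeatsAt_succ (h'.left (max s' b) (by simp; omega))
      (h.right (max s' b) (by simp; omega))
  · -- here `s' = b'`, and the shift `k + 1` runs from `b' - 1` over `k + 1` positions
    refine hw.not_forall_repeatsAt (Nat.succ_pos k) (b' - 1) fun i hi => ?_
    rw [mem_Ico] at hi
    rcases lt_or_ge i b' with hib | hib
    · exact h.right i (by simp; omega)
    · exact h'.right i (by simp; omega)

theorem card_inter_le (hw : SquareFree w) (h : IsConfig w k s b) (h' : IsConfig w k' s' b')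
    (hkk : k + 2 ≤ k') : #(Ico s (s + k) ∩ Ico s' (s' + k')) ≤ 4 * (k' - k) - 4 := by
  have piece : ∀ {m m' x y}, m < m' → (∀ i ∈ Ico x y, RepeatsAt w m i) →
      (∀ i ∈ Ico x y, RepeatsAt w m' i) → #(Ico x y) ≤ m' - m - 1 := fun hm hA hB => by
    have := hw.sub_lt_of_repeatsAt hm fun i hi => ⟨hA i hi, hB i hi⟩
    rw [Nat.card_Ico]; omega
  -- split the overlap by the side of `b` and of `b'`: each piece carries two distinct shifts
  have hLL := piece (x := max s s') (y := min b b') (show k < k' by omega)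
    (fun i hi => h.left i (by simp at hi ⊢; omega))
    (fun i hi => h'.left i (by simp at hi ⊢; omega))
  have hLR := piece (x := max s b') (y := min b (s' + k')) (show k < k' + 1 by omega)
    (fun i hi => h.left i (by simp at hi ⊢; omega))
    (fun i hi => h'.right i (by simp at hi ⊢; omega))
  have hRL := piece (x := max b s') (y := min (s + k) b') (show k + 1 < k' by omega)
    (fun i hi => h.right i (by simp at hi ⊢; omega))
    (fun i hi => h'.left i (by simp at hi ⊢; omega))
  have hRR := piece (x := max b b') (y := min (s + k) (s' + k')) (show k + 1 < k' + 1 by omega)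
    (fun i hi => h.right i (by simp at hi ⊢; omega))
    (fun i hi => h'.right i (by simp at hi ⊢; omega))
  have hcover : Ico s (s + k) ∩ Ico s' (s' + k') ⊆
      (Ico (max s s') (min b b') ∪ Ico (max s b') (min b (s' + k'))) ∪
        (Ico (max b s') (min (s + k) b') ∪ Ico (max b b') (min (s + k) (s' + k'))) := by
    intro i hi
    simp only [mem_inter, mem_union, mem_Ico] at hi ⊢
    omega
  calc _ ≤ _ := card_le_card hcover
    _ ≤ _ := (card_union_le _ _).trans (add_le_add (card_union_le _ _) (card_union_le _ _))
    _ ≤ 4 * (k' - k) - 4 := by omega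

end IsConfig

open scoped Classical in
noncomputable def configGaps (w : List α) (k : ℕ) : Finset ℕ :=
  {b ∈ range (w.length + 1) | ∃ s, IsConfig w k s b}

/-- Any configuration at the gap would do; the least start is a canonical choice. -/
noncomputable def configStart (w : List α) (k b : ℕ) : ℕ :=
  sInf {s | IsConfig w k s b}

noncomputable def configInterval (w : List α) (k b : ℕ) : Finset ℕ :=
  Ico (configStart w k b) (configStart w k b + k)

section ConfigGaps

variable {w : List α} {k b b' i : ℕ}

theorem mem_configGaps : b ∈ configGaps w k ↔ b ≤ w.length ∧ ∃ s, IsConfig w k s b := by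
  simp [configGaps]

theorem isConfig_configStart (hb : b ∈ configGaps w k) : IsConfig w k (configStart w k b) b :=
  Nat.sInf_mem (mem_configGaps.mp hb).2

theorem card_configInterval : #(configInterval w k b) = k := by
  simp [configInterval]

theorem configInterval_subset_range (hb : b ∈ configGaps w k) :
    configInterval w k b ⊆ range w.length :=
  (isConfig_configStart hb).Ico_subset_range

theorem eq_of_mem_configInterval (hw : SquareFree w) (hb : b ∈ configGaps w k)
    (hb' : b' ∈ configGaps w k) (hi : i ∈ configInterval w k b)
    (hi' : i ∈ configInterval w k b') : b = b' := by
  have hk : 0 < k := by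
    by_contra! hk
    simp [configInterval, show k = 0 by omega] at hi
  have key := fun {b b'} (hb : b ∈ configGaps w k) (hb' : b' ∈ configGaps w k) =>
    (isConfig_configStart hb).add_le_of_lt hw hk (isConfig_configStart hb')
  simp only [configInterval, mem_Ico] at hi hi'
  rcases lt_trichotomy b b' with hlt | heq | hgt
  · have := key hb hb' hlt; omega
  · exact heq
  · have := key hb' hb hgt; omega

theorem card_configGaps_mul_le (hw : SquareFree w) (k : ℕ) :
    #(configGaps w k) * k ≤ w.length := by
  have := card_mul_le_card_mul (fun b i => i ∈ configInterval w k b) (m := k) (n := 1)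
    (s := configGaps w k) (t := range w.length)
    (fun b hb => by
      rw [bipartiteAbove, filter_mem_eq_inter,
        inter_eq_right.mpr (configInterval_subset_range hb), card_configInterval])
    (fun i _ => card_le_one.mpr fun b hb b' hb' => by
      simp only [bipartiteBelow, mem_filter] at hb hb'
      exact eq_of_mem_configInterval hw hb.1 hb'.1 hb.2 hb'.2)
  simpa using this

end ConfigGaps

theorem le_card_Ico_inter_Ico {L s s' k k' i : ℕ} (hk : 2 * L ≤ k) (hk' : 2 * L ≤ k')
    (hi : i ∈ Ico s (s + k)) (hi' : i ∈ Ico s' (s' + k')) (hside : L ≤ i - s ↔ L ≤ i - s') :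
    L + 1 ≤ #(Ico s (s + k) ∩ Ico s' (s' + k')) := by
  rw [Ico_inter_Ico, Nat.card_Ico]
  rw [mem_Ico] at hi hi'
  by_cases hL : L ≤ i - s
  · have := hside.mp hL; omega
  · have := mt hside.mpr hL; omega

section DyadicClass

variable {w : List α} {m k k' b b' i : ℕ}

/-- The two intervals share more than `4m` positions, which `IsConfig.card_inter_le` allows only
for levels at least `m + 2` apart. -/
theorem add_le_of_mem_configInterval (hw : SquareFree w) (hb : b ∈ configGaps w k)
    (hb' : b' ∈ configGaps w k') (hmk : 8 * m ≤ k) (hkk : k + 2 ≤ k')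
    (hi : i ∈ configInterval w k b) (hi' : i ∈ configInterval w k' b')
    (hside : 4 * m ≤ i - configStart w k b ↔ 4 * m ≤ i - configStart w k' b') :
    k + m + 2 ≤ k' := by
  have hlarge := le_card_Ico_inter_Ico (L := 4 * m) (by omega) (by omega) hi hi' hside
  have hsmall := (isConfig_configStart hb).card_inter_le hw (isConfig_configStart hb') hkk
  omega

theorem card_configs_containing_le (hw : SquareFree w) (m i : ℕ) :
    #{q ∈ (Ico (8 * m) (16 * m)).sigma (configGaps w) | i ∈ configInterval w q.1 q.2} ≤ 32 := by
  classical
  let code : (Σ _ : ℕ, ℕ) → ℕ × Bool × ℕ := fun q =>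
    (q.1 % 2, decide (4 * m ≤ i - configStart w q.1 q.2), (q.1 - 8 * m) / (m + 2))
  refine (card_le_card_of_injOn code (t := range 2 ×ˢ univ ×ˢ range 8) ?_ ?_).trans (by simp)
  · intro q hq
    simp only [coe_filter, mem_sigma, mem_Ico, Set.mem_ofPred_eq] at hq
    simp only [code, coe_product, coe_range, Set.mem_prod, Set.mem_Iio, coe_univ, Set.mem_univ,
      true_and]
    exact ⟨Nat.mod_lt _ two_pos, Nat.div_lt_of_lt_mul (by omega)⟩
  · intro q hq q' hq' hcode
    wlog hle : q.1 ≤ q'.1 generalizing q q'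
    · exact (this hq' hq hcode.symm (by omega)).symm
    simp only [coe_filter, mem_sigma, mem_Ico, Set.mem_ofPred_eq] at hq hq'
    simp only [code, Prod.mk.injEq, decide_eq_decide] at hcode
    obtain ⟨hpar, hside, hbucket⟩ := hcode
    rcases hle.eq_or_lt with heq | hlt
    · obtain ⟨k, b⟩ := q
      obtain ⟨k', b'⟩ := q'
      obtain rfl : k = k' := heq
      obtain rfl : b = b' := eq_of_mem_configInterval hw hq.1.2 hq'.1.2 hq.2 hq'.2
      rfl
    · have hgap := add_le_of_mem_configInterval hw hq.1.2 hq'.1.2 hq.1.1.1 (by omega) hq.2 hq'.2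
        hside
      have : (q.1 - 8 * m) / (m + 2) + 1 ≤ (q'.1 - 8 * m) / (m + 2) := by
        rw [← Nat.add_div_right _ (by omega)]
        exact Nat.div_le_div_right (by omega)
      omega

theorem sum_card_configGaps_Ico_mul_le (hw : SquareFree w) (m : ℕ) :
    (∑ k ∈ Ico (8 * m) (16 * m), #(configGaps w k)) * (8 * m) ≤ w.length * 32 := by
  rw [← card_sigma]
  refine (card_mul_le_card_mul (fun q i => i ∈ configInterval w q.1 q.2)
    (s := (Ico (8 * m) (16 * m)).sigma (configGaps w)) (t := range w.length) (fun q hq => ?_)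
    (fun i _ => ?_)).trans (by rw [card_range])
  · rw [mem_sigma, mem_Ico] at hq
    rw [bipartiteAbove, filter_mem_eq_inter,
      inter_eq_right.mpr (configInterval_subset_range hq.2), card_configInterval]
    exact hq.1.1
  · exact card_configs_containing_le hw m i

end DyadicClass

theorem sum_Ico_one_two_pow {M : Type*} [AddCommMonoid M] (f : ℕ → M) (J : ℕ) :
    ∑ k ∈ Ico 1 (2 ^ J), f k = ∑ j ∈ range J, ∑ k ∈ Ico (2 ^ j) (2 ^ (j + 1)), f k := by
  induction J with
  | zero => simp
  | succ J ih =>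
    rw [sum_range_succ, ← ih, sum_Ico_consecutive _ Nat.one_le_two_pow
      (Nat.pow_le_pow_right two_pos J.le_succ)]

theorem sum_le_two_mul_of_mul_two_pow_le {x : ℕ → ℕ} {n : ℕ} (h : ∀ j, x j * 2 ^ j ≤ n)
    (J : ℕ) : ∑ j ∈ range J, x j ≤ 2 * n := by
  have hx : ∀ j, (x j : ℝ) ≤ n * (1 / 2) ^ j := fun j => by
    rw [one_div, inv_pow, ← div_eq_mul_inv, le_div_iff₀ (by positivity)]
    exact_mod_cast h j
  have : (∑ j ∈ range J, (x j : ℝ)) ≤ 2 * n :=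
    calc _ ≤ ∑ j ∈ range J, (n : ℝ) * (1 / 2) ^ j := sum_le_sum fun j _ => hx j
      _ = n * ∑ j ∈ range J, (1 / 2 : ℝ) ^ j := (mul_sum _ _ _).symm
      _ ≤ n * 2 := by gcongr; exact sum_geometric_two_le J
      _ = 2 * n := mul_comm _ _
  exact_mod_cast this

section AllLevels

variable {w : List α}

theorem sum_card_configGaps_Ico_two_pow_le (hw : SquareFree w) (j : ℕ) :
    ∑ k ∈ Ico (2 ^ j) (2 ^ (j + 1)), #(configGaps w k) ≤ w.length := by
  refine Nat.le_of_mul_le_mul_right ?_ (Nat.two_pow_pos j)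
  calc (∑ k ∈ Ico (2 ^ j) (2 ^ (j + 1)), #(configGaps w k)) * 2 ^ j
      = ∑ k ∈ Ico (2 ^ j) (2 ^ (j + 1)), #(configGaps w k) * 2 ^ j := sum_mul _ _ _
    _ ≤ ∑ k ∈ Ico (2 ^ j) (2 ^ (j + 1)), w.length := sum_le_sum fun k hk =>
        (Nat.mul_le_mul_left _ (mem_Ico.mp hk).1).trans (card_configGaps_mul_le hw k)
    _ = w.length * 2 ^ j := by
        rw [sum_const, Nat.card_Ico, smul_eq_mul, pow_succ, mul_two, Nat.add_sub_cancel, mul_comm]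

theorem sum_card_configGaps_Ico_two_pow_mul_le (hw : SquareFree w) (j : ℕ) :
    (∑ k ∈ Ico (2 ^ (j + 5)) (2 ^ (j + 6)), #(configGaps w k)) * 2 ^ j ≤ w.length := by
  have h := sum_card_configGaps_Ico_mul_le hw (2 ^ (j + 2))
  rw [show 8 * 2 ^ (j + 2) = 2 ^ (j + 5) by ring, show 16 * 2 ^ (j + 2) = 2 ^ (j + 6) by ring] at h
  refine Nat.le_of_mul_le_mul_right (c := 32) ?_ (by norm_num)
  convert h using 1
  ring

theorem sum_card_configGaps_le (hw : SquareFree w) (N : ℕ) :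
    ∑ k ∈ range N, #(configGaps w k) ≤ 8 * w.length + 1 := by
  set B := fun j => ∑ k ∈ Ico (2 ^ j) (2 ^ (j + 1)), #(configGaps w k)
  have hzero : #(configGaps w 0) ≤ w.length + 1 := by
    classical
    exact (card_filter_le _ _).trans (card_range _).le
  have hlow : ∑ j ∈ range 5, B j ≤ 5 * w.length :=
    (sum_le_sum fun j _ => sum_card_configGaps_Ico_two_pow_le hw j).trans (by simp)
  have hhigh : ∑ j ∈ range N, B (5 + j) ≤ 2 * w.length :=
    sum_le_two_mul_of_mul_two_pow_le (fun j => by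
      simpa [B, add_comm 5 j, add_assoc] using sum_card_configGaps_Ico_two_pow_mul_le hw j) N
  calc ∑ k ∈ range N, #(configGaps w k)
      ≤ ∑ k ∈ range (2 ^ (5 + N)), #(configGaps w k) :=
        sum_le_sum_of_subset (range_subset_range.mpr (Nat.lt_two_pow_self.trans_le
          (Nat.pow_le_pow_right two_pos (by omega))).le)
    _ = #(configGaps w 0) + (∑ j ∈ range 5, B j + ∑ j ∈ range N, B (5 + j)) := by
        rw [range_eq_Ico, ← sum_Ico_consecutive _ zero_le_one Nat.one_le_two_pow,
          sum_Ico_one_two_pow, sum_range_add]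
        simp [B]
    _ ≤ 8 * w.length + 1 := by omega

end AllLevels

theorem List.insertIdx_eq_take_append_cons_drop (w : List α) {b : ℕ} (hb : b ≤ w.length)
    (c : α) :
    w.insertIdx b c = w.take b ++ c :: w.drop b := by
  induction w generalizing b with
  | nil => simp_all
  | cons x xs ih =>
    cases b with
    | zero => simp
    | succ b => simp [List.insertIdx_succ_cons, ih (Nat.le_of_succ_le_succ hb)]

theorem List.reverse_insertIdx (w : List α) {b : ℕ} (hb : b ≤ w.length) (c : α) :
    (w.insertIdx b c).reverse = w.reverse.insertIdx (w.length - b) c := by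
  rw [w.insertIdx_eq_take_append_cons_drop hb,
    w.reverse.insertIdx_eq_take_append_cons_drop (by simp), List.reverse_append,
    List.reverse_cons, List.reverse_drop, List.reverse_take, List.append_assoc,
    List.singleton_append]

theorem forall_repeatsAt_reverse {u : List α} {s p : ℕ}
    (h : ∀ i ∈ Ico s (s + p), RepeatsAt u p i) :
    ∀ j ∈ Ico (u.length - s - 2 * p) (u.length - s - p), RepeatsAt u.reverse p j := by
  intro j hj
  rw [mem_Ico] at hj
  have hp : 0 < p := by omega
  obtain ⟨hlen, hrep⟩ := h (u.length - 1 - (j + p)) (by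
    have := (h (s + p - 1) (by simp; omega)).1
    simp; omega)
  refine ⟨by simp; omega, ?_⟩
  rw [List.getElem?_reverse (by omega), List.getElem?_reverse (by omega), hrep]
  congr 1
  omega

section Insertion

variable {w : List α} {b : ℕ} {c : α}

theorem SquareFree.exists_square_insertIdx (hw : SquareFree w) (hb : b ≤ w.length)
    (h : ¬ SquareFree (w.insertIdx b c)) :
    ∃ s p, 0 < p ∧ s ≤ b ∧ b < s + 2 * p ∧
      ∀ i ∈ Ico s (s + p), RepeatsAt (w.insertIdx b c) p i := by
  obtain ⟨s, p, hp, hrep⟩ := not_squareFree_iff_exists_repeatsAt.mp h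
  have hlen := List.length_insertIdx_of_le_length hb c
  refine ⟨s, p, hp, ?_, ?_, hrep⟩
  · by_contra! hbs
    refine hw.not_forall_repeatsAt hp (s - 1) fun i hi => ?_
    rw [mem_Ico] at hi
    obtain ⟨h₁, h₂⟩ := hrep (i + 1) (by simp; omega)
    rw [List.getElem?_insertIdx, List.getElem?_insertIdx, if_neg (by omega), if_neg (by omega),
      if_neg (by omega), if_neg (by omega)] at h₂
    exact ⟨by omega, by simpa [show i + 1 + p - 1 = i + p by omega] using h₂⟩
  · by_contra! hbs
    refine hw.not_forall_repeatsAt hp s fun i hi => ?_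
    rw [mem_Ico] at hi
    obtain ⟨h₁, h₂⟩ := hrep i (by simp; omega)
    rw [List.getElem?_insertIdx_of_lt (by omega), List.getElem?_insertIdx_of_lt (by omega)] at h₂
    exact ⟨by omega, h₂⟩

theorem isConfig_of_repeatsAt_insertIdx (hb : b ≤ w.length) {s p : ℕ} (hsb : s ≤ b)
    (hbs : b < s + p) (hrep : ∀ i ∈ Ico s (s + p), RepeatsAt (w.insertIdx b c) p i) :
    IsConfig w (p - 1) s b ∧ w[b + (p - 1)]? = some c := by
  have hlen := List.length_insertIdx_of_le_length hb c
  have hget := fun i => (List.getElem?_insertIdx (l := w) (x := c) (i := b) (j := i))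
  refine ⟨⟨hsb, by omega, fun i hi => ?_, fun i hi => ?_⟩, ?_⟩
  · rw [mem_Ico] at hi
    obtain ⟨h₁, h₂⟩ := hrep i (by simp; omega)
    rw [hget, hget, if_pos hi.2, if_neg (by omega), if_neg (by omega)] at h₂
    exact ⟨by omega, by simpa [show i + p - 1 = i + (p - 1) by omega] using h₂⟩
  · rw [mem_Ico] at hi
    obtain ⟨h₁, h₂⟩ := hrep (i + 1) (by simp; omega)
    rw [hget, hget, if_neg (by omega), if_neg (by omega), if_neg (by omega),
      if_neg (by omega)] at h₂
    exact ⟨by omega, by simpa [show i + 1 + p - 1 = i + (p - 1 + 1) by omega] using h₂⟩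
  · obtain ⟨h₁, h₂⟩ := hrep b (by simp; omega)
    rw [hget, hget, if_neg (by omega), if_pos rfl, if_pos hb, if_neg (by omega),
      if_neg (by omega)] at h₂
    simpa [show b + p - 1 = b + (p - 1) by omega] using h₂.symm

theorem SquareFree.exists_isConfig_of_insertIdx (hw : SquareFree w) (hb : b ≤ w.length)
    (h : ¬ SquareFree (w.insertIdx b c)) :
    (∃ k s, IsConfig w k s b ∧ w[b + k]? = some c) ∨
      ∃ k s, IsConfig w.reverse k s (w.length - b) ∧ w.reverse[w.length - b + k]? = some c := by
  obtain ⟨s, p, hp, hsb, hbs, hrep⟩ := hw.exists_square_insertIdx hb h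
  rcases lt_or_ge b (s + p) with hleft | hright
  · exact Or.inl ⟨p - 1, s, isConfig_of_repeatsAt_insertIdx hb hsb hleft hrep⟩
  · have hfit := (hrep (s + p - 1) (by simp; omega)).1
    have hrev := forall_repeatsAt_reverse hrep
    rw [List.length_insertIdx_of_le_length hb] at hfit
    rw [w.reverse_insertIdx hb, List.length_insertIdx_of_le_length hb] at hrev
    refine Or.inr ⟨p - 1, w.length + 1 - s - 2 * p,
      isConfig_of_repeatsAt_insertIdx (by simp) (by omega) (by omega) fun i hi => ?_⟩
    exact hrev i (by simp at hi ⊢; omega)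

end Insertion

theorem SquareFree.ncard_not_squareFree_insertIdx_le {w : List α} (hw : SquareFree w) :
    {p : ℕ × α | p.1 ≤ w.length ∧ ¬ SquareFree (w.insertIdx p.1 p.2)}.ncard ≤
      ∑ k ∈ range w.length, #(configGaps w k) +
        ∑ k ∈ range w.length, #(configGaps w.reverse k) := by
  classical
  set bad := {p : ℕ × α | p.1 ≤ w.length ∧ ¬ SquareFree (w.insertIdx p.1 p.2)}
  set T := (range w.length).sigma (configGaps w)
  set T' := (range w.length).sigma (configGaps w.reverse)
  set read := T.image fun q => (q.2, w[q.2 + q.1]?)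
  set readMirrored := T'.image fun q => (w.length - q.2, w.reverse[q.2 + q.1]?)
  have hsub : Prod.map id some '' bad ⊆ ↑(read ∪ readMirrored) := by
    rintro _ ⟨⟨b, c⟩, ⟨hb, hbad⟩, rfl⟩
    simp only [coe_union, Set.mem_union, mem_coe, read, readMirrored, T, T', mem_image,
      mem_sigma, mem_range, Prod.map, id, Prod.mk.injEq, Sigma.exists]
    rcases hw.exists_isConfig_of_insertIdx hb hbad with ⟨k, s, hconf, hc⟩ | ⟨k, s, hconf, hc⟩
    · have := (List.getElem?_eq_some_iff.mp hc).1
      exact Or.inl ⟨k, b, ⟨by omega, mem_configGaps.mpr ⟨hb, s, hconf⟩⟩, rfl, hc⟩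
    · have := (List.getElem?_eq_some_iff.mp hc).1
      rw [List.length_reverse] at this
      exact Or.inr ⟨k, w.length - b, ⟨by omega, mem_configGaps.mpr ⟨by simp, s, hconf⟩⟩,
        by omega, hc⟩
  calc bad.ncard = (Prod.map id some '' bad).ncard :=
        (Set.ncard_image_of_injective _
          (Function.injective_id.prodMap (Option.some_injective α))).symm
    _ ≤ #(read ∪ readMirrored) := (Set.ncard_le_ncard hsub).trans (Set.ncard_coe_finset _).le
    _ ≤ #T + #T' := (card_union_le _ _).trans (add_le_add card_image_le card_image_le)
    _ = _ := by rw [card_sigma, card_sigma]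

end

theorem count_bad_insertions_general {α : Type*} (W : List α) (n : ℕ)
    (hn : W.length = n) (hW : SquareFree W) :
    (({p : ℕ × α | p.1 ≤ n ∧ ¬ SquareFree (W.insertIdx p.1 p.2)}.ncard : ℝ))
      < 16.7 * ((n : ℝ) + 1) := by
  subst hn
  have hbad := hW.ncard_not_squareFree_insertIdx_le
  have hlevels := sum_card_configGaps_le hW W.length
  have hlevels' := sum_card_configGaps_le hW.reverse W.length
  rw [List.length_reverse] at hlevels'
  have hcount : ({p : ℕ × α | p.1 ≤ W.length ∧ ¬ SquareFree (W.insertIdx p.1 p.2)}.ncard : ℝ) ≤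
      16 * W.length + 2 := by
    exact_mod_cast (by omega : _ ≤ 16 * W.length + 2)
  linarith [(W.length.cast_nonneg : (0 : ℝ) ≤ W.length)]

/-- For a square-free word `W` of length `n` over a finite alphabet, the number of pairs
`(b, c)` with `0 ≤ b ≤ n` and `c` a letter such that inserting `c` at gap `b` creates a
square is less than `16.7 (n + 1)`. -/
theorem count_bad_insertions {α : Type*} [Fintype α] (W : List α) (n : ℕ)
    (hn : W.length = n) (hW : SquareFree W) :
    (({p : ℕ × α | p.1 ≤ n ∧ ¬ SquareFree (W.insertIdx p.1 p.2)}.ncard : ℝ))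
      < 16.7 * ((n : ℝ) + 1) :=
  count_bad_insertions_general W n hn hW
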